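/- arXiv:2212.11097 — 3 statements merged into one kernel-verified Lean document; each statement's English description precedes it below -/
import Mathlib

section
/- Let Δ be a convex lattice polygon with boundary data β, and let γ be a λ-increasing lattice path from p to q contained in Δ. If γ′ is a lattice path with γ ≺_L γ′ or γ ≺_R γ′, then D(γ′) ⊆ D(γ) as multisets, i.e. every down step of γ′ is a down step of γ, counted with multiplicity. -/
open Classical

noncomputable section

namespace TropPaths

/-- Lattice points of the plane. -/
abbrev Pt := ℤ × ℤ

/-- The order on `ℤ²` induced by `λ(x,y) = x - εy` for a small irrational `ε > 0`:
`p ≺ q` iff `p₁ < q₁`, or (`p₁ = q₁` and `p₂ > q₂`). -/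
def lamLT (p q : Pt) : Prop := p.1 < q.1 ∨ (p.1 = q.1 ∧ q.2 < p.2)

/-- A lattice path, recorded as the list of its points, is `λ`-increasing. -/
def Increasing (γ : List Pt) : Prop := List.Chain' lamLT γ

/-- The determinant of two vectors in `ℤ²`. -/
def det (u v : Pt) : ℤ := u.1 * v.2 - u.2 * v.1

/-- The `k`-th point of a path (junk value out of range). -/
def pt (γ : List Pt) (k : ℕ) : Pt := γ.getD k (0, 0)

/-- The `k`-th step vector of a path. -/
def stepAt (γ : List Pt) (k : ℕ) : Pt := pt γ (k + 1) - pt γ k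

/-- The list of all step vectors of a path. -/
def steps (γ : List Pt) : List Pt := List.zipWith (fun a b => b - a) γ γ.tail

/-- The multiset of down steps `(0,-s)`, `s > 0`, of a path. -/
def downSteps (γ : List Pt) : Multiset Pt :=
  Multiset.filter (fun v => v.1 = 0 ∧ v.2 < 0) (steps γ : Multiset Pt)

/-- The multiset of up-right steps of a path. -/
def upRightSteps (γ : List Pt) : Multiset Pt :=
  Multiset.filter (fun v => 0 < v.1 ∧ 0 < v.2) (steps γ : Multiset Pt)

/-- The path makes a turn of sign `s` at the (interior) index `k`; for left turns
`s = (0 < ·)`, for right turns `s = (· < 0)`. -/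
def TurnAt (s : ℤ → Prop) (γ : List Pt) (k : ℕ) : Prop :=
  0 < k ∧ k + 1 < γ.length ∧ s (det (pt γ k - pt γ (k - 1)) (pt γ (k + 1) - pt γ k))

/-- `k` is the first turn of sign `s` of the path. -/
def FirstTurn (s : ℤ → Prop) (γ : List Pt) (k : ℕ) : Prop :=
  TurnAt s γ k ∧ ∀ j, TurnAt s γ j → k ≤ j

/-- Twice the area of the triangle with vertices `γ(k-1), γ(k), γ(k+1)`. -/
def triArea2 (γ : List Pt) (k : ℕ) : ℕ :=
  (det (pt γ k - pt γ (k - 1)) (pt γ (k + 1) - pt γ k)).natAbs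

/-- The path obtained by cutting the corner at index `k`, i.e. deleting the point `γ(k)`. -/
def cut (γ : List Pt) (k : ℕ) : List Pt := γ.eraseIdx k

/-- The path obtained by completing the parallelogram at index `k`, i.e. replacing
`γ(k)` by `γ(k-1) + γ(k+1) - γ(k)`. -/
def push (γ : List Pt) (k : ℕ) : List Pt :=
  γ.set k (pt γ (k - 1) + pt γ (k + 1) - pt γ k)

/-- All points of the path lie in `Δ`. -/
def Inside (Δ : Set Pt) (γ : List Pt) : Prop := ∀ z ∈ γ, z ∈ Δ

/-- Mikhalkin's multiplicity recursion, as a functional relation: `MultRel Δ Init s γ m`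
means that the recursion (performed always at the *first* turn of sign `s`) assigns the
multiplicity `m` to the path `γ`.  Here `Δ` is the set of lattice points of the polygon,
`Init` the set of initial paths (of multiplicity `1`), and `s` the turn sign
(`0 < ·` for left turns / `mult₊`, `· < 0` for right turns / `mult₋`). -/
inductive MultRel (Δ : Set Pt) (Init : List Pt → Prop) (s : ℤ → Prop) : List Pt → ℕ → Prop
  | init {γ : List Pt} : Init γ → MultRel Δ Init s γ 1
  | noTurn {γ : List Pt} : ¬Init γ → (∀ k, ¬TurnAt s γ k) → MultRel Δ Init s γ 0
  | stepIn {γ : List Pt} {k m' m'' : ℕ} : ¬Init γ → FirstTurn s γ k →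
      Inside Δ (push γ k) → MultRel Δ Init s (cut γ k) m' →
      MultRel Δ Init s (push γ k) m'' →
      MultRel Δ Init s γ (triArea2 γ k * m' + m'')
  | stepOut {γ : List Pt} {k m' : ℕ} : ¬Init γ → FirstTurn s γ k →
      ¬Inside Δ (push γ k) → MultRel Δ Init s (cut γ k) m' →
      MultRel Δ Init s γ (triArea2 γ k * m')

/-- The multiplicity function determined by Mikhalkin's recursion. -/
def multOf (Δ : Set Pt) (Init : List Pt → Prop) (s : ℤ → Prop) (γ : List Pt) : ℕ :=
  if h : ∃ m, MultRel Δ Init s γ m then h.choose else 0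

/-- `γ ≺ δ`: the path `δ` is obtained from `γ` by finitely many steps of the multiplicity
recursion (each step cuts the corner at the first turn of sign `s`, or completes the
parallelogram there). -/
inductive Reaches (Δ : Set Pt) (Init : List Pt → Prop) (s : ℤ → Prop) : List Pt → List Pt → Prop
  | refl (γ : List Pt) : Reaches Δ Init s γ γ
  | cutStep {γ δ : List Pt} {k : ℕ} : ¬Init γ → FirstTurn s γ k →
      Reaches Δ Init s (cut γ k) δ → Reaches Δ Init s γ δ
  | pushStep {γ δ : List Pt} {k : ℕ} : ¬Init γ → FirstTurn s γ k →
      Inside Δ (push γ k) → Reaches Δ Init s (push γ k) δ → Reaches Δ Init s γ δ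

/-- The lattice path starting at `p` with the given list of step vectors. -/
def pathFrom : Pt → List Pt → List Pt
  | p, [] => [p]
  | p, v :: vs => p :: pathFrom (p + v) vs

/-- Horizontal (rightward) steps of the given sizes. -/
def hSteps (l : List ℕ) : List Pt := l.map fun k => ((k : ℤ), 0)

/-- Vertical downward steps of the given sizes. -/
def dSteps (l : List ℕ) : List Pt := l.map fun k => ((0 : ℤ), -(k : ℤ))

/-- A multiset of positive integers is a partition of `t`. -/
def IsPartition (m : Multiset ℕ) (t : ℕ) : Prop := (∀ k ∈ m, 0 < k) ∧ m.sum = t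

/-! ## The rectangle `[0,c] × [0,d]` -/

/-- The lattice points of the rectangle with vertices `(0,0), (c,0), (0,d), (c,d)`. -/
def rect (c d : ℕ) : Set Pt := {z | 0 ≤ z.1 ∧ z.1 ≤ (c : ℤ) ∧ 0 ≤ z.2 ∧ z.2 ≤ (d : ℤ)}

/-- `β₊`-initial paths of the rectangle: from `p = (0,d)` clockwise along the top edge with
step sizes the parts of `μ₂` and then down the right edge with step sizes the parts of `ν₂`. -/
def InitPlusRect (d : ℕ) (μ₂ ν₂ : Multiset ℕ) (γ : List Pt) : Prop :=
  ∃ s t : List ℕ, (s : Multiset ℕ) = μ₂ ∧ (t : Multiset ℕ) = ν₂ ∧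
    γ = pathFrom (0, (d : ℤ)) (hSteps s ++ dSteps t)

/-- `β₋`-initial paths of the rectangle: from `p = (0,d)` counterclockwise down the left edge
with step sizes the parts of `ν₁` and then along the bottom edge with step sizes the parts
of `μ₁`. -/
def InitMinusRect (d : ℕ) (μ₁ ν₁ : Multiset ℕ) (γ : List Pt) : Prop :=
  ∃ s t : List ℕ, (s : Multiset ℕ) = ν₁ ∧ (t : Multiset ℕ) = μ₁ ∧
    γ = pathFrom (0, (d : ℤ)) (dSteps s ++ hSteps t)

/-- `mult₊` for the rectangle with boundary data `(μ₁, μ₂, ν₁, ν₂)`. -/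
def multPlusRect (c d : ℕ) (μ₂ ν₂ : Multiset ℕ) : List Pt → ℕ :=
  multOf (rect c d) (InitPlusRect d μ₂ ν₂) (fun x => 0 < x)

/-- `mult₋` for the rectangle with boundary data `(μ₁, μ₂, ν₁, ν₂)`. -/
def multMinusRect (c d : ℕ) (μ₁ ν₁ : Multiset ℕ) : List Pt → ℕ :=
  multOf (rect c d) (InitMinusRect d μ₁ ν₁) (fun x => x < 0)

/-- `mult = mult₊ · mult₋` for the rectangle with boundary data `(μ₁, μ₂, ν₁, ν₂)`. -/
def multRect (c d : ℕ) (μ₁ μ₂ ν₁ ν₂ : Multiset ℕ) (γ : List Pt) : ℕ :=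
  multPlusRect c d μ₂ ν₂ γ * multMinusRect c d μ₁ ν₁ γ

/-- A `λ`-increasing lattice path from `(0,d)` to `(c,0)` contained in the rectangle. -/
def IsPathRect (c d : ℕ) (γ : List Pt) : Prop :=
  Increasing γ ∧ γ.head? = some (0, (d : ℤ)) ∧ γ.getLast? = some ((c : ℤ), 0) ∧
    Inside (rect c d) γ

/-- The genericity condition: all subset sums of the `xᵢ` are distinct. -/
def Generic {n : ℕ} (x : Fin n → ℕ) : Prop :=
  ∀ I J : Finset (Fin n), I ≠ J → ∑ i ∈ I, x i ≠ ∑ j ∈ J, x j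

/-! ## General convex lattice polygons with boundary data -/

/-- The displacement vector of an edge: (lattice length of the edge) times the primitive
direction.  An edge is recorded as a pair (primitive direction, multiset of step lengths
`β_e`, listing each length `k` with multiplicity `β_e(k)`). -/
def edgeVec (e : Pt × Multiset ℕ) : Pt := ((e.2.sum : ℤ) * e.1.1, (e.2.sum : ℤ) * e.1.2)

/-- The endpoint of a chain of edges starting at `p`. -/
def chainEnd (p : Pt) (l : List (Pt × Multiset ℕ)) : Pt := p + (l.map edgeVec).sum

/-- The successive vertices of a chain of edges starting at `p`. -/
def chainPts : Pt → List (Pt × Multiset ℕ) → List Pt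
  | p, [] => [p]
  | p, e :: es => p :: chainPts (p + edgeVec e) es

/-- A convex lattice polygon together with boundary data `β`: it is encoded by its
`λ`-minimal vertex `p`, and its two boundary chains from `p` to the `λ`-maximal vertex `q`,
the clockwise one `cw` and the counterclockwise one `ccw`.  Each edge carries its primitive
direction and the multiset of step lengths `β_e` (which must sum to the lattice length of
the edge; here the lattice length is *defined* as that sum). -/
structure PolyData where
  /-- the `λ`-minimal vertex -/
  p : Pt
  /-- the clockwise boundary chain from `p` to `q` -/
  cw : List (Pt × Multiset ℕ)
  /-- the counterclockwise boundary chain from `p` to `q` -/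
  ccw : List (Pt × Multiset ℕ)
  cw_ne : cw ≠ []
  ccw_ne : ccw ≠ []
  /-- all edge directions are `λ`-positive -/
  cw_lam : ∀ e ∈ cw, lamLT (0, 0) e.1
  ccw_lam : ∀ e ∈ ccw, lamLT (0, 0) e.1
  /-- edge directions are primitive -/
  cw_prim : ∀ e ∈ cw, Int.gcd e.1.1 e.1.2 = 1
  ccw_prim : ∀ e ∈ ccw, Int.gcd e.1.1 e.1.2 = 1
  /-- the step lengths on each edge are positive, and each edge has positive lattice length -/
  cw_pos : ∀ e ∈ cw, e.2 ≠ 0 ∧ ∀ k ∈ e.2, 0 < k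
  ccw_pos : ∀ e ∈ ccw, e.2 ≠ 0 ∧ ∀ k ∈ e.2, 0 < k
  /-- strict convexity: consecutive clockwise edges turn right -/
  cw_conv : (cw.map Prod.fst).Chain' fun u v => det u v < 0
  /-- strict convexity: consecutive counterclockwise edges turn left -/
  ccw_conv : (ccw.map Prod.fst).Chain' fun u v => 0 < det u v
  /-- the two chains have common endpoint `q` -/
  closes : chainEnd p cw = chainEnd p ccw
  /-- convexity at the vertex `p` -/
  junct_p : ∀ u w : Pt, (cw.map Prod.fst).head? = some u →
    (ccw.map Prod.fst).head? = some w → 0 < det w u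
  /-- convexity at the vertex `q` -/
  junct_q : ∀ u w : Pt, (cw.map Prod.fst).getLast? = some u →
    (ccw.map Prod.fst).getLast? = some w → 0 < det u w

/-- The `λ`-maximal vertex of the polygon. -/
def PolyData.q (P : PolyData) : Pt := chainEnd P.p P.ccw

/-- The canonical embedding `ℤ² → ℝ²`. -/
def toR (z : Pt) : ℝ × ℝ := ((z.1 : ℝ), (z.2 : ℝ))

/-- The set of lattice points of the polygon: all lattice points of the convex hull of the
boundary vertices. -/
def polySet (P : PolyData) : Set Pt :=
  {z | toR z ∈ convexHull ℝ
    (toR '' {w | w ∈ chainPts P.p P.cw ∨ w ∈ chainPts P.p P.ccw})}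

/-- `ExpandChain chain s` holds if the list of step vectors `s` traverses the edges of
`chain` in order, taking on each edge `e` exactly `β_e(k)` steps of lattice length `k`
(in some order). -/
def ExpandChain : List (Pt × Multiset ℕ) → List Pt → Prop
  | [], s => s = []
  | e :: es, s => ∃ (l : List ℕ) (r : List Pt), (l : Multiset ℕ) = e.2 ∧ ExpandChain es r ∧
      s = (l.map fun k => ((k : ℤ) * e.1.1, (k : ℤ) * e.1.2)) ++ r

/-- The initial paths determined by a boundary chain: the paths from `p` to `q` along the
chain whose steps on each edge `e` realize the data `β_e`. -/
def InitChain (p : Pt) (chain : List (Pt × Multiset ℕ)) (γ : List Pt) : Prop :=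
  ∃ s, ExpandChain chain s ∧ γ = pathFrom p s

/-- `mult₋` of a path in the polygon `P`. -/
def multMinusP (P : PolyData) : List Pt → ℕ :=
  multOf (polySet P) (InitChain P.p P.ccw) (fun x => x < 0)

/-- `mult₊` of a path in the polygon `P`. -/
def multPlusP (P : PolyData) : List Pt → ℕ :=
  multOf (polySet P) (InitChain P.p P.cw) (fun x => 0 < x)

/-! Both recursions act at a turn on two consecutive steps `u`, `v` of the path: completing
the parallelogram swaps them, and cutting the corner replaces them by `u + v`. Both moves keep
the path `λ`-increasing, and steps of a `λ`-increasing path have nonnegative first coordinate,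
so `u + v` is vertical only if `u` and `v` both are, which the turn (`det u v ≠ 0`) excludes.
Hence the first move permutes the down steps and the second can only lose some. -/

lemma lamLT_iff_lamLT_zero_sub {p q : Pt} : lamLT p q ↔ lamLT 0 (q - p) := by
  simp only [lamLT, Prod.fst_sub, Prod.snd_sub, Prod.fst_zero, Prod.snd_zero]
  omega

lemma lamLT_trans {p q r : Pt} (hpq : lamLT p q) (hqr : lamLT q r) : lamLT p r := by
  unfold lamLT at *
  omega

instance : Trans lamLT lamLT lamLT := ⟨lamLT_trans⟩

lemma Increasing.sublist {γ δ : List Pt} (hγ : Increasing γ) (h : δ.Sublist γ) : Increasing δ :=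
  List.IsChain.sublist hγ h

lemma fst_add_ne_zero {u v : Pt} (hu : lamLT 0 u) (hv : lamLT 0 v) (hdet : det u v ≠ 0) :
    (u + v).1 ≠ 0 := by
  intro hsum
  simp only [lamLT, Prod.fst_zero, Prod.snd_zero, Prod.fst_add] at hu hv hsum
  have hu1 : u.1 = 0 := by omega
  have hv1 : v.1 = 0 := by omega
  exact hdet (by simp [det, hu1, hv1])

lemma steps_cons_cons (p q : Pt) (l : List Pt) :
    steps (p :: q :: l) = (q - p) :: steps (q :: l) := rfl

lemma steps_append_cons : ∀ (l : List Pt) (u : Pt) (r : List Pt),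
    steps (l ++ u :: r) = steps (l ++ [u]) ++ steps (u :: r)
  | [], _, _ => rfl
  | [_], _, _ => rfl
  | a :: b :: l, u, r => by
    have ih := steps_append_cons (b :: l) u r
    simp only [List.cons_append, steps_cons_cons] at ih ⊢
    rw [ih]

lemma steps_append_cons_cons (l : List Pt) (x y : Pt) (r : List Pt) :
    steps (l ++ x :: y :: r) = steps (l ++ [x]) ++ (y - x) :: steps (y :: r) := by
  rw [steps_append_cons, steps_cons_cons]

lemma increasing_iff_forall_mem_steps : ∀ γ : List Pt, Increasing γ ↔ ∀ v ∈ steps γ, lamLT 0 v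
  | [] => iff_of_true .nil (fun _ h => nomatch h)
  | [_] => iff_of_true (.singleton _) (fun _ h => nomatch h)
  | p :: q :: l => by
    change List.IsChain lamLT (p :: q :: l) ↔ _
    rw [List.isChain_cons_cons, steps_cons_cons, List.forall_mem_cons]
    exact and_congr lamLT_iff_lamLT_zero_sub (increasing_iff_forall_mem_steps (q :: l))

lemma pt_append_length_add (l r : List Pt) (i : ℕ) : pt (l ++ r) (l.length + i) = pt r i := by
  simp only [pt, List.getD_append_right _ _ _ _ (Nat.le_add_right _ _), Nat.add_sub_cancel_left]

lemma pt_append_length (l r : List Pt) : pt (l ++ r) l.length = pt r 0 :=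
  pt_append_length_add l r 0

lemma TurnAt.exists_eq_append {s : ℤ → Prop} {γ : List Pt} {k : ℕ} (h : TurnAt s γ k) :
    ∃ l x y z r, γ = l ++ x :: y :: z :: r ∧ k = l.length + 1 ∧ s (det (y - x) (z - y)) := by
  obtain ⟨hk, hlen, hs⟩ := h
  obtain ⟨j, rfl⟩ : ∃ j, k = j + 1 := ⟨k - 1, by omega⟩
  have hdrop : 3 ≤ (γ.drop j).length := by rw [List.length_drop]; omega
  obtain ⟨x, y, z, r, hxyzr⟩ : ∃ x y z r, γ.drop j = x :: y :: z :: r := by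
    match γ.drop j, hdrop with
    | x :: y :: z :: r, _ => exact ⟨x, y, z, r, rfl⟩
  have hγ : γ = γ.take j ++ x :: y :: z :: r := by rw [← hxyzr, List.take_append_drop]
  have hj : (γ.take j).length = j := by rw [List.length_take]; omega
  generalize γ.take j = l at hγ hj
  subst hγ hj
  simp only [Nat.add_sub_cancel, add_assoc, pt_append_length_add, pt_append_length] at hs
  exact ⟨l, x, y, z, r, rfl, rfl, hs⟩

lemma cut_append_cons (l : List Pt) (x y : Pt) (r : List Pt) :
    cut (l ++ x :: y :: r) (l.length + 1) = l ++ x :: r := by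
  rw [cut, List.eraseIdx_append_of_length_le (Nat.le_add_right _ _), Nat.add_sub_cancel_left]
  rfl

lemma push_append_cons (l : List Pt) (x y z : Pt) (r : List Pt) :
    push (l ++ x :: y :: z :: r) (l.length + 1) = l ++ x :: (x + z - y) :: z :: r := by
  simp only [push, Nat.add_sub_cancel, add_assoc, pt_append_length_add, pt_append_length]
  rw [List.set_append, if_neg (by omega), Nat.add_sub_cancel_left]
  rfl

lemma Increasing.cut {γ : List Pt} (hγ : Increasing γ) (k : ℕ) : Increasing (cut γ k) :=
  hγ.sublist (List.eraseIdx_sublist γ k)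

lemma downSteps_append_cons_le {l r : List Pt} {x y z : Pt}
    (hinc : Increasing (l ++ x :: y :: z :: r)) (hdet : det (y - x) (z - y) ≠ 0) :
    downSteps (l ++ x :: z :: r) ≤ downSteps (l ++ x :: y :: z :: r) := by
  have hpos := (increasing_iff_forall_mem_steps _).1 hinc
  simp only [steps_append_cons_cons, steps_cons_cons, List.mem_append, List.mem_cons] at hpos
  have hzx : ¬((z - x).1 = 0 ∧ (z - x).2 < 0) := fun hdown =>
    fst_add_ne_zero (hpos _ (.inr (.inl rfl))) (hpos _ (.inr (.inr (.inl rfl)))) hdet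
      (by rw [sub_add_sub_cancel']; exact hdown.1)
  simp only [downSteps, steps_append_cons_cons, steps_cons_cons, ← Multiset.coe_add,
    ← Multiset.cons_coe, Multiset.filter_add]
  rw [Multiset.filter_cons_of_neg (p := fun v : Pt => v.1 = 0 ∧ v.2 < 0) _ hzx]
  gcongr
  exact (Multiset.le_cons_self _ _).trans (Multiset.le_cons_self _ _)

lemma steps_append_parallelogram_perm (l : List Pt) (x y z : Pt) (r : List Pt) :
    (steps (l ++ x :: (x + z - y) :: z :: r)).Perm (steps (l ++ x :: y :: z :: r)) := by
  simp only [steps_append_cons_cons, steps_cons_cons]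
  rw [show x + z - y - x = z - y by abel, show z - (x + z - y) = y - x by abel]
  exact (List.Perm.swap _ _ _).append_left _

lemma TurnAt.downSteps_cut_le {s : ℤ → Prop} (hs : ∀ t, s t → t ≠ 0) {γ : List Pt} {k : ℕ}
    (ht : TurnAt s γ k) (hinc : Increasing γ) : downSteps (cut γ k) ≤ downSteps γ := by
  obtain ⟨l, x, y, z, r, rfl, rfl, hturn⟩ := ht.exists_eq_append
  rw [cut_append_cons]
  exact downSteps_append_cons_le hinc (hs _ hturn)

lemma TurnAt.steps_push_perm {s : ℤ → Prop} {γ : List Pt} {k : ℕ} (ht : TurnAt s γ k) :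
    (steps (push γ k)).Perm (steps γ) := by
  obtain ⟨l, x, y, z, r, rfl, rfl, -⟩ := ht.exists_eq_append
  rw [push_append_cons]
  exact steps_append_parallelogram_perm l x y z r

lemma TurnAt.downSteps_push {s : ℤ → Prop} {γ : List Pt} {k : ℕ} (ht : TurnAt s γ k) :
    downSteps (push γ k) = downSteps γ := by
  rw [downSteps, downSteps, Multiset.coe_eq_coe.2 ht.steps_push_perm]

lemma TurnAt.increasing_push {s : ℤ → Prop} {γ : List Pt} {k : ℕ} (ht : TurnAt s γ k)
    (hinc : Increasing γ) : Increasing (push γ k) := by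
  rw [increasing_iff_forall_mem_steps] at hinc ⊢
  exact fun v hv => hinc v (ht.steps_push_perm.subset hv)

lemma Reaches.downSteps_le {Δ : Set Pt} {Init : List Pt → Prop} {s : ℤ → Prop}
    (hs : ∀ t, s t → t ≠ 0) {γ δ : List Pt} (h : Reaches Δ Init s γ δ) (hinc : Increasing γ) :
    downSteps δ ≤ downSteps γ := by
  induction h with
  | refl => exact le_rfl
  | cutStep _ hfirst _ ih =>
    exact (ih (hinc.cut _)).trans (hfirst.1.downSteps_cut_le hs hinc)
  | pushStep _ hfirst _ _ ih =>
    exact hfirst.1.downSteps_push ▸ ih (hfirst.1.increasing_push hinc)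

theorem downSteps_subset_of_reaches_general (P : PolyData) (γ γ' : List Pt)
    (hinc : Increasing γ)
    (h : Reaches (polySet P) (InitChain P.p P.ccw) (fun x => x < 0) γ γ' ∨
         Reaches (polySet P) (InitChain P.p P.cw) (fun x => 0 < x) γ γ') :
    downSteps γ' ≤ downSteps γ := by
  rcases h with h | h
  · exact h.downSteps_le (fun _ ht => ht.ne) hinc
  · exact h.downSteps_le (fun _ ht => ht.ne') hinc

/-- If `γ ≺_L γ′` or `γ ≺_R γ′`, then every down step of `γ′` is a down
step of `γ`, counted with multiplicity. -/
theorem downSteps_subset_of_reaches (P : PolyData) (γ γ' : List Pt)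
    (hinc : Increasing γ)
    (hfrom : γ.head? = some P.p) (hto : γ.getLast? = some P.q)
    (hin : Inside (polySet P) γ)
    (h : Reaches (polySet P) (InitChain P.p P.ccw) (fun x => x < 0) γ γ' ∨
         Reaches (polySet P) (InitChain P.p P.cw) (fun x => 0 < x) γ γ') :
    downSteps γ' ≤ downSteps γ :=
  downSteps_subset_of_reaches_general P γ γ' hinc h

end TropPaths
end
end

section
/- Let Δ be the rectangle of width c and height d with boundary data (μ₁, μ₂, ν₁, ν₂), where μ₂ = (1,…,1) consists of c parts equal to 1. If γ is a λ-increasing lattice path from (0,d) to (c,0) contained in Δ with mult(γ) ≠ 0, then every step of γ moves at most one unit to the right, i.e. γ(k+1)₁ − γ(k)₁ ≤ 1 for all k. -/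
open Classical

noncomputable section

namespace TropPaths

/-
The recursion for `mult₊` only ever cuts a corner of the path, which merges two consecutive
steps into their sum, or completes a parallelogram, which swaps two consecutive steps. When
all steps of a path move weakly to the right, neither operation removes a step moving more
than `b` units to the right. The `β₊`-initial paths for `μ₂ = (1,…,1)` have no step moving
more than one unit to the right, so every branch of the recursion started at such a path ends
with multiplicity `0`.
-/

section Invariant

variable {Δ : Set Pt} {Init : List Pt → Prop} {s : ℤ → Prop} {P : List Pt → Prop}

lemma MultRel.eq_zero_of_invariant (hInit : ∀ δ, Init δ → ¬P δ)
    (hcut : ∀ γ k, TurnAt s γ k → P γ → P (cut γ k))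
    (hpush : ∀ γ k, TurnAt s γ k → P γ → P (push γ k))
    {γ : List Pt} {m : ℕ} (h : MultRel Δ Init s γ m) (hP : P γ) : m = 0 := by
  induction h with
  | init hi => exact absurd hP (hInit _ hi)
  | noTurn => rfl
  | stepIn _ hk _ _ _ ih' ih'' =>
    rw [ih' (hcut _ _ hk.1 hP), ih'' (hpush _ _ hk.1 hP), Nat.mul_zero]
  | stepOut _ hk _ _ ih' => rw [ih' (hcut _ _ hk.1 hP), Nat.mul_zero]

lemma multOf_eq_zero_of_invariant (hInit : ∀ δ, Init δ → ¬P δ)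
    (hcut : ∀ γ k, TurnAt s γ k → P γ → P (cut γ k))
    (hpush : ∀ γ k, TurnAt s γ k → P γ → P (push γ k))
    {γ : List Pt} (hP : P γ) : multOf Δ Init s γ = 0 := by
  unfold multOf
  split_ifs with h
  · exact h.choose_spec.eq_zero_of_invariant hInit hcut hpush hP
  · rfl

end Invariant

lemma pt_set_self {γ : List Pt} {k : ℕ} (h : k < γ.length) (a : Pt) :
    pt (γ.set k a) k = a := by
  simp [pt, List.getD_eq_getElem?_getD, List.getElem?_set_self h]

lemma pt_set_ne {γ : List Pt} {k j : ℕ} (h : k ≠ j) (a : Pt) :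
    pt (γ.set k a) j = pt γ j := by
  simp [pt, List.getD_eq_getElem?_getD, List.getElem?_set_ne h]

lemma pt_eraseIdx (γ : List Pt) (k j : ℕ) :
    pt (γ.eraseIdx k) j = if j < k then pt γ j else pt γ (j + 1) := by
  simp only [pt, List.getD_eq_getElem?_getD, List.getElem?_eraseIdx]
  split <;> rfl

lemma length_cut {γ : List Pt} {k : ℕ} (h : k < γ.length) :
    (cut γ k).length = γ.length - 1 := by
  simp [cut, List.length_eraseIdx, h]

lemma length_push (γ : List Pt) (k : ℕ) : (push γ k).length = γ.length := by
  simp [push]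

lemma stepAt_cut (γ : List Pt) (i j : ℕ) :
    stepAt (cut γ (i + 1)) j =
      if j < i then stepAt γ j
      else if j = i then stepAt γ i + stepAt γ (i + 1)
      else stepAt γ (j + 1) := by
  simp only [cut, stepAt, pt_eraseIdx]
  split_ifs <;> first | omega | (subst_vars; abel)

lemma stepAt_push {γ : List Pt} {i : ℕ} (h : i + 2 < γ.length) (j : ℕ) :
    stepAt (push γ (i + 1)) j =
      if j = i then stepAt γ (i + 1) else if j = i + 1 then stepAt γ i else stepAt γ j := by
  simp only [push, stepAt, Nat.add_sub_cancel]
  split_ifs with hi hi'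
  · subst hi
    rw [pt_set_self (by omega), pt_set_ne (by omega : j + 1 ≠ j)]
    abel
  · subst hi'
    rw [pt_set_ne (by omega : i + 1 ≠ i + 1 + 1), pt_set_self (by omega)]
    abel
  · rw [pt_set_ne (by omega : i + 1 ≠ j + 1), pt_set_ne (by omega : i + 1 ≠ j)]

def StepsNonneg (γ : List Pt) : Prop := ∀ k, k + 1 < γ.length → 0 ≤ (stepAt γ k).1

def HasStepRightGT (b : ℕ) (γ : List Pt) : Prop :=
  ∃ k, k + 1 < γ.length ∧ (b : ℤ) < (stepAt γ k).1

section Surgery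

variable {γ : List Pt} {k : ℕ}

lemma StepsNonneg.cut (hn : StepsNonneg γ) (hk0 : 0 < k) (hk1 : k + 1 < γ.length) :
    StepsNonneg (cut γ k) := by
  obtain ⟨i, rfl⟩ : ∃ i, k = i + 1 := ⟨k - 1, by omega⟩
  intro j hj
  rw [length_cut (by omega)] at hj
  rw [stepAt_cut]
  split_ifs
  · exact hn j (by omega)
  · have := hn i (by omega)
    have := hn (i + 1) (by omega)
    rw [Prod.fst_add]
    omega
  · exact hn (j + 1) (by omega)

lemma StepsNonneg.push (hn : StepsNonneg γ) (hk0 : 0 < k) (hk1 : k + 1 < γ.length) :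
    StepsNonneg (push γ k) := by
  obtain ⟨i, rfl⟩ : ∃ i, k = i + 1 := ⟨k - 1, by omega⟩
  intro j hj
  rw [length_push] at hj
  rw [stepAt_push (by omega)]
  split_ifs
  · exact hn (i + 1) (by omega)
  · exact hn i (by omega)
  · exact hn j hj

lemma HasStepRightGT.cut {b : ℕ} (hb : HasStepRightGT b γ) (hn : StepsNonneg γ) (hk0 : 0 < k)
    (hk1 : k + 1 < γ.length) : HasStepRightGT b (cut γ k) := by
  obtain ⟨i, rfl⟩ : ∃ i, k = i + 1 := ⟨k - 1, by omega⟩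
  obtain ⟨j, hj, hjb⟩ := hb
  have hlen : (cut γ (i + 1)).length = γ.length - 1 := length_cut (by omega)
  rcases lt_trichotomy j i with hji | rfl | hij
  · exact ⟨j, by omega, by rwa [stepAt_cut, if_pos hji]⟩
  · refine ⟨j, by omega, ?_⟩
    have := hn (j + 1) (by omega)
    rw [stepAt_cut, if_neg (lt_irrefl j), if_pos rfl, Prod.fst_add]
    omega
  · obtain ⟨m, rfl⟩ : ∃ m, j = m + 1 := ⟨j - 1, by omega⟩
    by_cases hmi : m = i
    · subst hmi
      refine ⟨m, by omega, ?_⟩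
      have := hn m (by omega)
      rw [stepAt_cut, if_neg (lt_irrefl m), if_pos rfl, Prod.fst_add]
      omega
    · exact ⟨m, by omega, by rwa [stepAt_cut, if_neg (by omega), if_neg hmi]⟩

lemma HasStepRightGT.push {b : ℕ} (hb : HasStepRightGT b γ) (hk0 : 0 < k)
    (hk1 : k + 1 < γ.length) : HasStepRightGT b (push γ k) := by
  obtain ⟨i, rfl⟩ : ∃ i, k = i + 1 := ⟨k - 1, by omega⟩
  obtain ⟨j, hj, hjb⟩ := hb
  have hlen := length_push γ (i + 1)
  by_cases hji : j = i
  · subst hji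
    exact ⟨j + 1, by omega, by rwa [stepAt_push (by omega), if_neg (by omega), if_pos rfl]⟩
  by_cases hji' : j = i + 1
  · subst hji'
    exact ⟨i, by omega, by rwa [stepAt_push (by omega), if_pos rfl]⟩
  · exact ⟨j, by omega, by rwa [stepAt_push (by omega), if_neg hji, if_neg hji']⟩

end Surgery

lemma Increasing.stepsNonneg {γ : List Pt} (h : Increasing γ) : StepsNonneg γ := by
  intro k hk
  have hR := List.isChain_iff_getElem.mp h k (by omega)
  simp only [stepAt, pt, List.getD_eq_getElem _ _ hk,
    List.getD_eq_getElem _ _ (by omega : k < γ.length), Prod.fst_sub, sub_nonneg]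
  rcases hR with hlt | ⟨heq, _⟩ <;> omega

lemma length_pathFrom (p : Pt) (vs : List Pt) : (pathFrom p vs).length = vs.length + 1 := by
  induction vs generalizing p with
  | nil => rfl
  | cons v vs ih => simp [pathFrom, ih]

lemma stepAt_pathFrom (p : Pt) {vs : List Pt} {k : ℕ} (hk : k < vs.length) :
    stepAt (pathFrom p vs) k = vs[k] := by
  induction vs generalizing p k with
  | nil => simp at hk
  | cons v vs ih =>
    cases k with
    | zero => cases vs <;> simp [stepAt, pt, pathFrom]
    | succ k => exact ih (p + v) (by simpa using hk)

lemma stepAt_fst_le_of_initPlusRect {d b : ℕ} {μ₂ ν₂ : Multiset ℕ}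
    (hμ₂ : ∀ a ∈ μ₂, a ≤ b) {γ : List Pt} (h : InitPlusRect d μ₂ ν₂ γ) {k : ℕ} (hk : k + 1 < γ.length) :
    (stepAt γ k).1 ≤ b := by
  obtain ⟨s, t, rfl, -, rfl⟩ := h
  rw [length_pathFrom] at hk
  have hle : ∀ v ∈ hSteps s ++ dSteps t, v.1 ≤ b := by
    intro v hv
    rcases List.mem_append.mp hv with hv | hv <;> obtain ⟨a, ha, rfl⟩ := List.mem_map.mp hv
    · -- `hSteps` elaborates with `s` coerced to a list of integers
      obtain ⟨n, hn, rfl⟩ : ∃ n ∈ s, a = (n : ℤ) := by simpa using ha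
      exact Int.ofNat_le.mpr (hμ₂ n (Multiset.mem_coe.mpr hn))
    · exact Int.natCast_nonneg b
  rw [stepAt_pathFrom _ (by omega)]
  exact hle _ (List.getElem_mem _)

theorem multPlusRect_eq_zero_of_lt_stepAt_fst {c d b : ℕ} {μ₂ ν₂ : Multiset ℕ}
    (hμ₂ : ∀ a ∈ μ₂, a ≤ b) {γ : List Pt} (hγ : Increasing γ) {k : ℕ}
    (hk : k + 1 < γ.length) (hb : (b : ℤ) < (stepAt γ k).1) :
    multPlusRect c d μ₂ ν₂ γ = 0 :=
  multOf_eq_zero_of_invariant (P := fun δ => StepsNonneg δ ∧ HasStepRightGT b δ)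
    (fun _ hδ ⟨_, _, hj, hjb⟩ => not_lt.mpr (stepAt_fst_le_of_initPlusRect hμ₂ hδ hj) hjb)
    (fun _ _ ⟨hk0, hk1, _⟩ ⟨hn, hb⟩ => ⟨hn.cut hk0 hk1, hb.cut hn hk0 hk1⟩)
    (fun _ _ ⟨hk0, hk1, _⟩ ⟨hn, hb⟩ => ⟨hn.push hk0 hk1, hb.push hk0 hk1⟩)
    ⟨hγ.stepsNonneg, k, hk, hb⟩

theorem step_right_le_one_of_mult_ne_zero_general (c d : ℕ)
    (μ₁ ν₁ ν₂ : Multiset ℕ)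
    (γ : List Pt) (hγ : IsPathRect c d γ)
    (hmult : multRect c d μ₁ (Multiset.replicate c 1) ν₁ ν₂ γ ≠ 0) :
    ∀ k, k + 1 < γ.length → (stepAt γ k).1 ≤ 1 := by
  intro k hk
  by_contra! hbig
  have hplus : multPlusRect c d (Multiset.replicate c 1) ν₂ γ = 0 :=
    multPlusRect_eq_zero_of_lt_stepAt_fst (b := 1)
      (fun _ ha => (Multiset.eq_of_mem_replicate ha).le) hγ.1 hk hbig
  exact hmult (by rw [multRect, hplus, zero_mul])

/-- In the rectangle of width `c` and height `d` with `μ₂ = (1,…,1)`, if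
`mult(γ) ≠ 0` then every step of `γ` moves at most one unit to the right. -/
theorem step_right_le_one_of_mult_ne_zero (c d : ℕ) (hc : 0 < c) (hd : 0 < d)
    (μ₁ ν₁ ν₂ : Multiset ℕ)
    (hμ₁ : IsPartition μ₁ c) (hν₁ : IsPartition ν₁ d) (hν₂ : IsPartition ν₂ d)
    (γ : List Pt) (hγ : IsPathRect c d γ)
    (hmult : multRect c d μ₁ (Multiset.replicate c 1) ν₁ ν₂ γ ≠ 0) :
    ∀ k, k + 1 < γ.length → (stepAt γ k).1 ≤ 1 :=
  step_right_le_one_of_mult_ne_zero_general c d μ₁ ν₁ ν₂ γ hγ hmult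

end TropPaths
end
end

section
/- Let a > b ≥ 0 be integers and η₁,…,η_k positive integers with η₁+⋯+η_k = a, such that Σ_{i∈I} ηᵢ ≠ Σ_{j∈J} ηⱼ for every pair of disjoint nonempty subsets I, J ⊆ {1,…,k} (in particular the ηᵢ are pairwise distinct). Let Δ be the trapezoid with vertices (0,0), (0,a), (1,a), (1,b), equipped with β data: one step of lattice length 1 on the top edge, one step on the bottom edge (from (0,0) to (1,b)), β_left(m) = #{i : ηᵢ = m} on the left edge, and an arbitrary admissible sequence β_right on the right edge (so Σ_m m·β_right(m) = a − b). Let γ be the λ-increasing lattice path from (0,a) to (1,b) that goes down the left edge taking consecutive down steps of sizes η₁,…,η_k and then takes the single bottom-edge step from (0,0) to (1,b). Then mult₊(γ) ≠ 0 if and only if there is a subset E ⊆ {1,…,k} with Σ_{i∈E} ηᵢ = a − b and β_right(m) = #{i ∈ E : ηᵢ = m} for all m; and in that case mult₊(γ) = ∏_{i∉E} ηᵢ. -/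
open Classical

noncomputable section

namespace TropPaths

/-! ## Admissible pairs and the paths `γ(A,B)` -/

/-- An admissible pair `(A,B)`: pairwise disjoint sequences `A₀,…,A_{c-1}` in `{1,…,n}`
whose entries together partition `{1,…,n}`, and pairwise disjoint subsets `B₀,…,B_{c-1}`
with union `{1,…,n}`, such that `B₀ ≠ ∅` and
`B_k ⊆ (A₀ ∪ ⋯ ∪ A_k) \ (B₀ ∪ ⋯ ∪ B_{k-1})` for all `k`. -/
def IsAdmissible {c n : ℕ} (A : Fin c → List (Fin n)) (B : Fin c → Finset (Fin n)) : Prop :=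
  ((List.ofFn A).flatten : Multiset (Fin n)) = (Finset.univ : Finset (Fin n)).val ∧
  (∀ i : Fin n, ∃! k : Fin c, i ∈ B k) ∧
  (∀ k : Fin c, (k : ℕ) = 0 → (B k).Nonempty) ∧
  ∀ k : Fin c, B k ⊆
    (Finset.univ.filter fun i => ∃ j : Fin c, j ≤ k ∧ i ∈ A j) \
      (Finset.univ.filter fun i => ∃ j : Fin c, j < k ∧ i ∈ B j)

/-- The steps of `γ(A,B)` in the column `x = k`: down steps of sizes `xᵢ`, `i ∈ A_k`, in
order, followed by the step `(1, Σ_{i ∈ B_k} xᵢ)` to the next column. -/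
def colSteps {c n : ℕ} (x : Fin n → ℕ) (A : Fin c → List (Fin n))
    (B : Fin c → Finset (Fin n)) (k : Fin c) : List Pt :=
  ((A k).map fun i => ((0 : ℤ), -(x i : ℤ))) ++ [((1 : ℤ), ∑ i ∈ B k, (x i : ℤ))]

/-- The lattice path `γ(A,B)` associated to an admissible pair, from `(0,d)` to `(c,0)`,
whose last step is the full right edge. -/
def gammaAB {c n : ℕ} (x : Fin n → ℕ) (A : Fin c → List (Fin n))
    (B : Fin c → Finset (Fin n)) : List Pt :=
  pathFrom (0, ((∑ i, x i : ℕ) : ℤ))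
    ((List.ofFn (colSteps x A B)).flatten ++ [((0 : ℤ), -((∑ i, x i : ℕ) : ℤ))])

/-! ## The trapezoid of Lemma 4.? -/

/-- The lattice points of the trapezoid with vertices `(0,0), (0,a), (1,a), (1,b)`. -/
def trap (a b : ℕ) : Set Pt :=
  {z | 0 ≤ z.1 ∧ z.1 ≤ 1 ∧ (b : ℤ) * z.1 ≤ z.2 ∧ z.2 ≤ (a : ℤ)}

/-- `β₊`-initial paths of the trapezoid: one step of lattice length 1 along the top edge,
then down the right edge with step sizes the parts of `βright`. -/
def InitPlusTrap (a : ℕ) (βright : Multiset ℕ) (γ : List Pt) : Prop :=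
  ∃ t : List ℕ, (t : Multiset ℕ) = βright ∧
    γ = pathFrom (0, (a : ℤ)) (((1 : ℤ), (0 : ℤ)) :: dSteps t)

/-! ## Automorphisms of a partition -/

/-- `|Aut ν| = ∏_k m_k(ν)!` where `m_k(ν)` is the number of parts of `ν` equal to `k`. -/
def autCard (m : Multiset ℕ) : ℕ :=
  (m.dedup.map fun k => (m.count k).factorial).prod

/-!
At its first left turn, `γ` meets the step across the trapezoid right after its last remaining
left step `d`. Cutting that corner merges the two steps, with weight `d`; completing the
parallelogram moves `d` to the right edge, and stays inside `Δ` exactly as long as the steps moved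
there sum to at most `a - b`. Hence the recursion only visits paths that go down the left edge,
across, and down the right edge, and unrolling it gives `mult₊(γ) = ∑_E ∏_{i ∉ E} ηᵢ` over the sets
`E` of moved steps whose sizes are `β_right`: such a path with empty left part is initial iff its
right steps are `β_right`, and has no left turn otherwise. Distinct `ηᵢ` leave at most one `E`.
-/

section Paths

lemma getD_mem {α : Type*} {l : List α} {i : ℕ} (hi : i < l.length) (d : α) :
    l.getD i d ∈ l := by
  simp [List.getD_eq_getElem?_getD, List.getElem?_eq_getElem hi]

lemma steps_pathFrom (p : Pt) (vs : List Pt) : steps (pathFrom p vs) = vs := by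
  induction vs generalizing p with
  | nil => rfl
  | cons v vs ih =>
    cases vs with
    | nil => simp [pathFrom, steps]
    | cons w ws => simpa [pathFrom, steps] using ih (p + v)

lemma pathFrom_injective (p : Pt) : Function.Injective (pathFrom p) := fun vs ws h => by
  simpa only [steps_pathFrom] using congrArg steps h

lemma self_mem_pathFrom (p : Pt) (vs : List Pt) : p ∈ pathFrom p vs := by
  cases vs <;> simp [pathFrom]

lemma mem_pathFrom_append {z p : Pt} {vs ws : List Pt} :
    z ∈ pathFrom p (vs ++ ws) ↔ z ∈ pathFrom p vs ∨ z ∈ pathFrom (p + vs.sum) ws := by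
  induction vs generalizing p with
  | nil =>
    simpa [pathFrom] using fun h : z = p => h ▸ self_mem_pathFrom p ws
  | cons v vs ih => simp [pathFrom, ih, add_assoc, or_assoc]

lemma pt_succ_sub_pt_pathFrom (p : Pt) (vs : List Pt) {j : ℕ} (hj : j < vs.length) :
    pt (pathFrom p vs) (j + 1) - pt (pathFrom p vs) j = vs.getD j 0 := by
  induction vs generalizing p j with
  | nil => simp at hj
  | cons v vs ih =>
    cases j with
    | zero => cases vs <;> simp [pathFrom, pt]
    | succ j => exact ih (p + v) (by simpa using hj)

lemma pt_sub_pt_pred_pathFrom (p : Pt) (vs : List Pt) {j : ℕ} (h0 : 0 < j)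
    (hj : j ≤ vs.length) :
    pt (pathFrom p vs) j - pt (pathFrom p vs) (j - 1) = vs.getD (j - 1) 0 := by
  obtain ⟨i, rfl⟩ : ∃ i, j = i + 1 := ⟨j - 1, by omega⟩
  exact pt_succ_sub_pt_pathFrom p vs (by omega)

lemma turnAt_pathFrom (s : ℤ → Prop) (p : Pt) (vs : List Pt) (j : ℕ) :
    TurnAt s (pathFrom p vs) j ↔
      0 < j ∧ j < vs.length ∧ s (det (vs.getD (j - 1) 0) (vs.getD j 0)) := by
  rw [TurnAt, length_pathFrom]
  constructor
  · rintro ⟨h0, hj, hs⟩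
    rw [pt_sub_pt_pred_pathFrom p vs h0 (by omega),
      pt_succ_sub_pt_pathFrom p vs (by omega)] at hs
    exact ⟨h0, by omega, hs⟩
  · rintro ⟨h0, hj, hs⟩
    refine ⟨h0, by omega, ?_⟩
    rwa [pt_sub_pt_pred_pathFrom p vs h0 hj.le, pt_succ_sub_pt_pathFrom p vs hj]

end Paths

section Corner

variable (p u w : Pt) (us ws : List Pt)

lemma cut_pathFrom :
    cut (pathFrom p (us ++ u :: w :: ws)) (us.length + 1) =
      pathFrom p (us ++ (u + w) :: ws) := by
  induction us generalizing p with
  | nil => simp [cut, pathFrom, add_assoc]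
  | cons x us ih => exact congrArg (p :: ·) (ih (p + x))

lemma push_pathFrom :
    push (pathFrom p (us ++ u :: w :: ws)) (us.length + 1) =
      pathFrom p (us ++ w :: u :: ws) := by
  induction us generalizing p with
  | nil =>
    have hpw : p + (p + u + w) - (p + u) = p + w := by abel
    cases ws <;> simp [push, pathFrom, pt, hpw, add_right_comm]
  | cons x us ih =>
    simp only [List.cons_append, pathFrom, List.length_cons, ← ih (p + x)]
    cases us <;> rfl

lemma triArea2_pathFrom :
    triArea2 (pathFrom p (us ++ u :: w :: ws)) (us.length + 1) = (det u w).natAbs := by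
  rw [triArea2, pt_sub_pt_pred_pathFrom _ _ (by omega) (by simp),
    pt_succ_sub_pt_pathFrom _ _ (by simp)]
  simp

lemma firstTurn_pathFrom {s : ℤ → Prop} (hus : ∀ v ∈ us, v.1 = 0) (hu : u.1 = 0)
    (hs0 : ¬ s 0) (hs : s (det u w)) :
    FirstTurn s (pathFrom p (us ++ u :: w :: ws)) (us.length + 1) := by
  have hvert : ∀ i ≤ us.length, ((us ++ u :: w :: ws).getD i 0).1 = 0 := by
    intro i hi
    have hmem : (us ++ [u]).getD i 0 ∈ us ++ [u] := getD_mem (by simp; omega) 0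
    rw [show us ++ u :: w :: ws = (us ++ [u]) ++ w :: ws by simp,
      List.getD_append _ _ _ _ (by simp; omega)]
    simp only [List.mem_append, List.mem_singleton] at hmem
    rcases hmem with hmem | hmem
    · exact hus _ hmem
    · rw [hmem, hu]
  refine ⟨(turnAt_pathFrom s p _ _).2 ⟨by omega, by simp, ?_⟩, fun j hj => ?_⟩
  · simpa [List.getD_append_right] using hs
  · obtain ⟨h0, -, hsj⟩ := (turnAt_pathFrom s p _ j).1 hj
    by_contra! hlt
    have hdet : det ((us ++ u :: w :: ws).getD (j - 1) 0) ((us ++ u :: w :: ws).getD j 0) = 0 := by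
      rw [det, hvert (j - 1) (by omega), hvert j (by omega)]
      ring
    exact hs0 (hdet ▸ hsj)

end Corner

lemma firstTurn_unique {s : ℤ → Prop} {γ : List Pt} {k k' : ℕ}
    (h : FirstTurn s γ k) (h' : FirstTurn s γ k') : k = k' :=
  le_antisymm (h.2 _ h'.1) (h'.2 _ h.1)

lemma multRel_unique {Δ : Set Pt} {Init : List Pt → Prop} {s : ℤ → Prop} {γ : List Pt}
    {m m' : ℕ} (h : MultRel Δ Init s γ m) (h' : MultRel Δ Init s γ m') : m = m' := by
  induction h generalizing m' with
  | init hI =>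
    cases h' <;> first | rfl | contradiction
  | noTurn hnI hnT =>
    cases h' with
    | init hI => contradiction
    | noTurn => rfl
    | stepIn _ hFT => exact absurd hFT.1 (hnT _)
    | stepOut _ hFT => exact absurd hFT.1 (hnT _)
  | stepIn _ hFT hIn _ _ ihcut ihpush =>
    cases h' with
    | init hI => contradiction
    | noTurn _ hnT => exact absurd hFT.1 (hnT _)
    | stepIn _ hFT' _ hcut' hpush' =>
      obtain rfl := firstTurn_unique hFT hFT'
      rw [ihcut hcut', ihpush hpush']
    | stepOut _ hFT' hIn' =>
      obtain rfl := firstTurn_unique hFT hFT'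
      contradiction
  | stepOut _ hFT hIn _ ihcut =>
    cases h' with
    | init hI => contradiction
    | noTurn _ hnT => exact absurd hFT.1 (hnT _)
    | stepIn _ hFT' hIn' =>
      obtain rfl := firstTurn_unique hFT hFT'
      contradiction
    | stepOut _ hFT' _ hcut' =>
      obtain rfl := firstTurn_unique hFT hFT'
      rw [ihcut hcut']

lemma multOf_eq_of_multRel {Δ : Set Pt} {Init : List Pt → Prop} {s : ℤ → Prop}
    {γ : List Pt} {m : ℕ} (h : MultRel Δ Init s γ m) : multOf Δ Init s γ = m := by
  have hex : ∃ m, MultRel Δ Init s γ m := ⟨m, h⟩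
  rw [multOf, dif_pos hex]
  exact multRel_unique hex.choose_spec h

section DownSteps

@[simp] lemma length_dSteps (l : List ℕ) : (dSteps l).length = l.length := by
  simp [dSteps]

@[simp] lemma dSteps_nil : dSteps [] = [] := rfl

@[simp] lemma dSteps_cons (k : ℕ) (l : List ℕ) :
    dSteps (k :: l) = ((0 : ℤ), -(k : ℤ)) :: dSteps l := rfl

lemma exists_of_mem_dSteps {v : Pt} {l : List ℕ} (hv : v ∈ dSteps l) :
    ∃ k ∈ l, v = ((0 : ℤ), -(k : ℤ)) := by
  induction l with
  | nil => simp at hv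
  | cons k l ih =>
    rcases List.mem_cons.1 hv with rfl | hv
    · exact ⟨k, List.mem_cons_self, rfl⟩
    · obtain ⟨k', hk', rfl⟩ := ih hv
      exact ⟨k', List.mem_cons_of_mem _ hk', rfl⟩

lemma sum_dSteps (l : List ℕ) : (dSteps l).sum = ((0 : ℤ), -((l.sum : ℕ) : ℤ)) := by
  induction l with
  | nil => rfl
  | cons k l ih => simp only [dSteps_cons, List.sum_cons, ih, Prod.mk_add_mk]; push_cast; ring_nf

lemma dSteps_injective : Function.Injective dSteps :=
  Function.LeftInverse.injective (g := List.map fun v => (-v.2).toNat) fun l => by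
    induction l with
    | nil => rfl
    | cons k l ih => simpa using ih

lemma mem_pathFrom_dSteps {z p : Pt} {l : List ℕ} (hz : z ∈ pathFrom p (dSteps l)) :
    z.1 = p.1 ∧ p.2 - ((l.sum : ℕ) : ℤ) ≤ z.2 ∧ z.2 ≤ p.2 := by
  induction l generalizing p with
  | nil =>
    obtain rfl : z = p := by simpa [dSteps, pathFrom] using hz
    simp
  | cons k l ih =>
    rw [dSteps_cons, pathFrom, List.mem_cons] at hz
    simp only [List.sum_cons, Nat.cast_add]
    rcases hz with rfl | hz
    · exact ⟨rfl, by omega, le_rfl⟩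
    · obtain ⟨h1, h2, h3⟩ := ih hz
      simp only [Prod.fst_add, Prod.snd_add, add_zero] at h1 h2 h3
      omega

end DownSteps

section TrapezoidPaths

variable (a b : ℕ)

/-- The rise of the step across the trapezoid that makes `trapPath a b ds ts` end at `(1, b)`. -/
def trapRise (ds ts : List ℕ) : ℤ := (b : ℤ) - a + ((ds.sum : ℕ) : ℤ) + ((ts.sum : ℕ) : ℤ)

def trapSteps (ds ts : List ℕ) : List Pt := dSteps ds ++ ((1 : ℤ), trapRise a b ds ts) :: dSteps ts

/-- Down the left edge with steps `ds`, across, and down the right edge with steps `ts`: the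
recursion for `mult₊` starting at `γ = trapPath a b (List.ofFn η) []` only visits such paths. -/
def trapPath (ds ts : List ℕ) : List Pt := pathFrom (0, (a : ℤ)) (trapSteps a b ds ts)

variable {a b}

lemma mem_trapPath {z : Pt} {ds ts : List ℕ} (hz : z ∈ trapPath a b ds ts) :
    (z.1 = 0 ∧ (a : ℤ) - ((ds.sum : ℕ) : ℤ) ≤ z.2 ∧ z.2 ≤ a) ∨
      (z.1 = 1 ∧ (b : ℤ) ≤ z.2 ∧ z.2 ≤ b + ((ts.sum : ℕ) : ℤ)) := by
  rw [trapPath, trapSteps, mem_pathFrom_append, sum_dSteps, pathFrom, List.mem_cons] at hz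
  rcases hz with hz | rfl | hz
  · exact Or.inl (by simpa using mem_pathFrom_dSteps hz)
  · exact Or.inl (by simp [-Nat.cast_list_sum])
  · have := mem_pathFrom_dSteps hz
    simp only [Prod.mk_add_mk, trapRise] at this
    exact Or.inr ⟨by simpa using this.1, by omega, by omega⟩

lemma right_top_mem_trapPath (ds ts : List ℕ) :
    ((1 : ℤ), (b : ℤ) + ((ts.sum : ℕ) : ℤ)) ∈ trapPath a b ds ts := by
  rw [trapPath, trapSteps, mem_pathFrom_append, sum_dSteps, pathFrom, List.mem_cons]
  refine Or.inr (Or.inr ?_)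
  convert self_mem_pathFrom _ _ using 1
  simp only [Prod.mk_add_mk, trapRise]
  ext <;> simp; ring

lemma inside_trapPath {ds ts : List ℕ} (hds : ds.sum ≤ a) (hts : b + ts.sum ≤ a) :
    Inside (trap a b) (trapPath a b ds ts) := fun z hz => by
  rcases mem_trapPath hz with ⟨h1, h2, h3⟩ | ⟨h1, h2, h3⟩ <;>
    refine ⟨by omega, by omega, ?_, by omega⟩ <;> rw [h1] <;> omega

lemma not_inside_trapPath {ds ts : List ℕ} (hts : a < b + ts.sum) :
    ¬ Inside (trap a b) (trapPath a b ds ts) := fun h => by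
  have := (h _ (right_top_mem_trapPath ds ts)).2.2.2
  omega

end TrapezoidPaths

section TrapezoidRecursion

variable (a b : ℕ) (ds ts : List ℕ) (d : ℕ)

lemma trapSteps_snoc : trapSteps a b (ds ++ [d]) ts =
    dSteps ds ++ ((0 : ℤ), -(d : ℤ)) :: ((1 : ℤ), trapRise a b (ds ++ [d]) ts) :: dSteps ts := by
  simp [trapSteps, dSteps]

lemma cut_trapPath_snoc :
    cut (trapPath a b (ds ++ [d]) ts) (ds.length + 1) = trapPath a b ds ts := by
  rw [trapPath, trapSteps_snoc, ← length_dSteps ds, cut_pathFrom, trapPath, trapSteps]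
  congr
  ext <;> simp [trapRise, -Nat.cast_list_sum]; ring

lemma push_trapPath_snoc :
    push (trapPath a b (ds ++ [d]) ts) (ds.length + 1) = trapPath a b ds (d :: ts) := by
  rw [trapPath, trapSteps_snoc, ← length_dSteps, push_pathFrom, trapPath, trapSteps, dSteps_cons]
  congr 4
  simp [trapRise, -Nat.cast_list_sum]; ring

lemma triArea2_trapPath_snoc : triArea2 (trapPath a b (ds ++ [d]) ts) (ds.length + 1) = d := by
  rw [trapPath, trapSteps_snoc, ← length_dSteps, triArea2_pathFrom]
  simp [det]

lemma firstTurn_trapPath_snoc (hd : 0 < d) :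
    FirstTurn (fun x => 0 < x) (trapPath a b (ds ++ [d]) ts) (ds.length + 1) := by
  rw [trapPath, trapSteps_snoc, ← length_dSteps]
  refine firstTurn_pathFrom _ _ _ _ _ (fun v hv => ?_) rfl (lt_irrefl 0) (by simpa [det] using hd)
  obtain ⟨k, -, rfl⟩ := exists_of_mem_dSteps hv
  rfl

lemma not_initPlusTrap_trapPath_snoc (T : Multiset ℕ) :
    ¬ InitPlusTrap a T (trapPath a b (ds ++ [d]) ts) := by
  rintro ⟨t, -, h⟩
  rw [trapPath, trapSteps_snoc] at h
  have := pathFrom_injective _ h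
  cases ds <;> simp at this

lemma initPlusTrap_trapPath_nil_iff {a b : ℕ} (ts : List ℕ) {T : Multiset ℕ} (hba : b ≤ a)
    (hT : T.sum = a - b) :
    InitPlusTrap a T (trapPath a b [] ts) ↔ (ts : Multiset ℕ) = T := by
  constructor
  · rintro ⟨t, rfl, h⟩
    have := pathFrom_injective _ h
    simp only [trapSteps, dSteps_nil, List.nil_append, List.cons.injEq] at this
    rw [dSteps_injective this.2]
  · intro h
    refine ⟨ts, h, ?_⟩
    have hts : ts.sum = a - b := by rw [← Multiset.sum_coe, h, hT]
    simp [trapPath, trapSteps, trapRise, hts, -Nat.cast_list_sum, Nat.cast_sub hba]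

lemma not_turnAt_trapPath_nil (j : ℕ) : ¬ TurnAt (fun x => 0 < x) (trapPath a b [] ts) j := by
  rw [trapPath, turnAt_pathFrom]
  rintro ⟨h0, hj, hs⟩
  obtain ⟨i, rfl⟩ : ∃ i, j = i + 1 := ⟨j - 1, by omega⟩
  simp only [trapSteps, dSteps_nil, List.nil_append, List.length_cons, add_tsub_cancel_right,
    List.getD_cons_succ] at hj hs
  obtain ⟨k, -, hw⟩ := exists_of_mem_dSteps (getD_mem (l := dSteps ts) (i := i) (by omega) 0)
  have hv : 0 ≤ ((((1 : ℤ), trapRise a b [] ts) :: dSteps ts).getD i 0).1 := by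
    rcases List.mem_cons.1 (getD_mem (l := (1, trapRise a b [] ts) :: dSteps ts) (i := i)
      (by simp only [List.length_cons]; omega) 0) with hv | hv
    · rw [hv]; exact zero_le_one
    · obtain ⟨k, -, hv⟩ := exists_of_mem_dSteps hv
      rw [hv]
  rw [hw, det] at hs
  simp only [mul_neg, mul_zero, sub_zero, neg_pos] at hs
  nlinarith

end TrapezoidRecursion

/-- The value of the recursion on `trapPath a b rs.reverse ts` for boundary data `T`: resolving the
last left step `d` either cuts it away (weight `d`) or pushes it onto the right edge. -/
def trapMult (T : Multiset ℕ) : List ℕ → Multiset ℕ → ℕ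
  | [], ts => if ts = T then 1 else 0
  | d :: rs, ts => d * trapMult T rs ts + trapMult T rs (d ::ₘ ts)

lemma trapMult_eq_zero_of_sum_lt {T : Multiset ℕ} (rs : List ℕ) {ts : Multiset ℕ}
    (h : T.sum < ts.sum) : trapMult T rs ts = 0 := by
  induction rs generalizing ts with
  | nil => rw [trapMult, if_neg (by rintro rfl; omega)]
  | cons d rs ih =>
    rw [trapMult, ih h, ih (by rw [Multiset.sum_cons]; omega), mul_zero, add_zero]

lemma multRel_trapPath {a b : ℕ} {T : Multiset ℕ} (hba : b ≤ a) (hT : T.sum = a - b)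
    (rs ts : List ℕ) (hrs : ∀ x ∈ rs, 0 < x) (hsum : rs.sum + ts.sum ≤ a) :
    MultRel (trap a b) (InitPlusTrap a T) (fun x => 0 < x) (trapPath a b rs.reverse ts)
      (trapMult T rs ts) := by
  induction rs generalizing ts with
  | nil =>
    rw [List.reverse_nil, trapMult]
    split_ifs with h
    · exact .init ((initPlusTrap_trapPath_nil_iff ts hba hT).2 h)
    · exact .noTurn (mt (initPlusTrap_trapPath_nil_iff ts hba hT).1 h)
        (not_turnAt_trapPath_nil a b ts)
  | cons d rs ih =>
    rw [List.sum_cons] at hsum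
    rw [List.reverse_cons, trapMult]
    have hfirst := firstTurn_trapPath_snoc a b rs.reverse ts d (hrs d List.mem_cons_self)
    have hni := not_initPlusTrap_trapPath_snoc a b rs.reverse ts d T
    have hcut := cut_trapPath_snoc a b rs.reverse ts d ▸
      ih ts (fun x hx => hrs x (List.mem_cons_of_mem _ hx)) (by omega)
    by_cases hin : d + ts.sum ≤ a - b
    · have hpush := push_trapPath_snoc a b rs.reverse ts d ▸
        ih (d :: ts) (fun x hx => hrs x (List.mem_cons_of_mem _ hx)) (by simp; omega)
      have hIn := push_trapPath_snoc a b rs.reverse ts d ▸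
        inside_trapPath (by simp; omega) (by simp; omega)
      simpa only [triArea2_trapPath_snoc a b, Multiset.cons_coe] using
        MultRel.stepIn hni hfirst hIn hcut hpush
    · have hOut := push_trapPath_snoc a b rs.reverse ts d ▸
        not_inside_trapPath (by simp; omega)
      rw [trapMult_eq_zero_of_sum_lt (ts := d ::ₘ ts) rs
        (by rw [Multiset.sum_cons, Multiset.sum_coe, hT]; omega), add_zero]
      simpa only [triArea2_trapPath_snoc a b] using MultRel.stepOut hni hfirst hOut hcut

lemma trapMult_map_eq_sum {α : Type*} [DecidableEq α] (f : α → ℕ) (T : Multiset ℕ) {l : List α}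
    (hl : l.Nodup) (ts : Multiset ℕ) :
    trapMult T (l.map f) ts = ∑ E ∈ l.toFinset.powerset,
      if E.val.map f + ts = T then ∏ i ∈ l.toFinset \ E, f i else 0 := by
  induction l generalizing ts with
  | nil => simp only [trapMult, List.map_nil, List.toFinset_nil, Finset.powerset_empty,
      Finset.sum_singleton, Finset.empty_val, Multiset.map_zero, zero_add, Finset.sdiff_self,
      Finset.prod_empty]
  | cons i l ih =>
    obtain ⟨hil, hl⟩ := List.nodup_cons.1 hl
    have hi : i ∉ l.toFinset := by simpa using hil
    rw [List.map_cons, trapMult, ih hl, ih hl, List.toFinset_cons,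
      Finset.sum_powerset_insert hi, Finset.mul_sum]
    congr 1 <;> refine Finset.sum_congr rfl fun E hE => ?_
    · have hiE : i ∉ E := fun h => hi (Finset.mem_powerset.1 hE h)
      rw [mul_ite, mul_zero, Finset.insert_sdiff_of_notMem _ hiE,
        Finset.prod_insert (by simp [hi])]
    · have hiE : i ∉ E := fun h => hi (Finset.mem_powerset.1 hE h)
      rw [Finset.insert_val_of_notMem hiE, Multiset.map_cons, Finset.insert_sdiff_insert,
        Finset.sdiff_insert_of_notMem hi, Multiset.add_cons, Multiset.cons_add]

lemma multOf_trapezoid_eq_sum {a b k : ℕ} (hba : b ≤ a) {η : Fin k → ℕ} (hpos : ∀ i, 0 < η i)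
    (hsum : ∑ i, η i = a) {T : Multiset ℕ} (hT : T.sum = a - b) :
    multOf (trap a b) (InitPlusTrap a T) (fun x => 0 < x)
        (pathFrom (0, (a : ℤ)) (dSteps (List.ofFn η) ++ [((1 : ℤ), (b : ℤ))])) =
      ∑ E ∈ (Finset.univ : Finset (Fin k)).powerset,
        if E.val.map η = T then ∏ i ∈ Eᶜ, η i else 0 := by
  have hpath : trapPath a b (List.ofFn η) [] =
      pathFrom (0, (a : ℤ)) (dSteps (List.ofFn η) ++ [((1 : ℤ), (b : ℤ))]) := by
    simp [trapPath, trapSteps, trapRise, List.sum_ofFn, hsum, -Nat.cast_list_sum]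
  have hrel := multRel_trapPath hba hT (List.ofFn η).reverse []
    (by simpa using fun i => hpos i) (by simp [List.sum_ofFn, hsum])
  rw [List.reverse_reverse, hpath] at hrel
  rw [multOf_eq_of_multRel hrel, List.ofFn_eq_map, ← List.map_reverse,
    trapMult_map_eq_sum η T (List.nodup_reverse.2 (List.nodup_finRange k))]
  simp [Finset.compl_eq_univ_sdiff]

lemma injective_of_disjoint_sum_ne {ι M : Type*} [AddCommMonoid M] {f : ι → M}
    (h : ∀ I J : Finset ι, I.Nonempty → J.Nonempty → Disjoint I J →
      ∑ i ∈ I, f i ≠ ∑ j ∈ J, f j) : Function.Injective f := fun i j hij => by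
  by_contra hne
  exact h {i} {j} (Finset.singleton_nonempty i) (Finset.singleton_nonempty j)
    (Finset.disjoint_singleton.2 hne) (by simpa using hij)

theorem multPlus_trapezoid_general (a b : ℕ) (hba : b < a) (k : ℕ) (η : Fin k → ℕ)
    (hpos : ∀ i, 0 < η i) (hsum : ∑ i, η i = a)
    (hgen : ∀ I J : Finset (Fin k), I.Nonempty → J.Nonempty → Disjoint I J →
      ∑ i ∈ I, η i ≠ ∑ j ∈ J, η j)
    (βright : Multiset ℕ) (hβsum : βright.sum = a - b) :
    (multOf (trap a b) (InitPlusTrap a βright) (fun x => 0 < x)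
        (pathFrom (0, (a : ℤ)) (dSteps (List.ofFn η) ++ [((1 : ℤ), (b : ℤ))])) ≠ 0 ↔
      ∃ E : Finset (Fin k), βright = E.val.map η ∧ ∑ i ∈ E, η i = a - b) ∧
    ∀ E : Finset (Fin k), βright = E.val.map η →
      multOf (trap a b) (InitPlusTrap a βright) (fun x => 0 < x)
        (pathFrom (0, (a : ℤ)) (dSteps (List.ofFn η) ++ [((1 : ℤ), (b : ℤ))]))
        = ∏ i ∈ Eᶜ, η i := by
  have hinj := injective_of_disjoint_sum_ne hgen
  rw [multOf_trapezoid_eq_sum hba.le hpos hsum hβsum]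
  have hvalue : ∀ E : Finset (Fin k), βright = E.val.map η →
      (∑ F ∈ (Finset.univ : Finset (Fin k)).powerset,
        if F.val.map η = βright then ∏ i ∈ Fᶜ, η i else 0) = ∏ i ∈ Eᶜ, η i := by
    intro E hE
    rw [Finset.sum_eq_single_of_mem E (Finset.mem_powerset.2 (Finset.subset_univ E)),
      if_pos hE.symm]
    intro F _ hFE
    exact if_neg fun hF =>
      hFE (Finset.val_injective (Multiset.map_injective hinj (hF.trans hE)))
  refine ⟨⟨fun hne => ?_, fun ⟨E, hE, _⟩ => ?_⟩, hvalue⟩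
  · by_contra hnone
    refine hne (Finset.sum_eq_zero fun E _ => if_neg fun hE => hnone ⟨E, hE.symm, ?_⟩)
    rw [← hβsum, ← hE, Finset.sum_eq_multiset_sum]
  · rw [hvalue E hE]
    exact (Finset.prod_pos fun i _ => hpos i).ne'

/-- In the trapezoid with vertices `(0,0), (0,a), (1,a), (1,b)`, the path
`γ` going down the left edge with steps `η₁,…,η_k` and then along the bottom edge has
`mult₊(γ) ≠ 0` iff `β_right = χ_E` for some `E ⊆ {1,…,k}` with `Σ_{i∈E} ηᵢ = a - b`, and in
that case `mult₊(γ) = ∏_{i∉E} ηᵢ`. -/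
theorem multPlus_trapezoid (a b : ℕ) (hba : b < a) (k : ℕ) (η : Fin k → ℕ)
    (hpos : ∀ i, 0 < η i) (hsum : ∑ i, η i = a)
    (hgen : ∀ I J : Finset (Fin k), I.Nonempty → J.Nonempty → Disjoint I J →
      ∑ i ∈ I, η i ≠ ∑ j ∈ J, η j)
    (βright : Multiset ℕ) (hβpos : ∀ m ∈ βright, 0 < m) (hβsum : βright.sum = a - b) :
    (multOf (trap a b) (InitPlusTrap a βright) (fun x => 0 < x)
        (pathFrom (0, (a : ℤ)) (dSteps (List.ofFn η) ++ [((1 : ℤ), (b : ℤ))])) ≠ 0 ↔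
      ∃ E : Finset (Fin k), βright = E.val.map η ∧ ∑ i ∈ E, η i = a - b) ∧
    ∀ E : Finset (Fin k), βright = E.val.map η →
      multOf (trap a b) (InitPlusTrap a βright) (fun x => 0 < x)
        (pathFrom (0, (a : ℤ)) (dSteps (List.ofFn η) ++ [((1 : ℤ), (b : ℤ))]))
        = ∏ i ∈ Eᶜ, η i :=
  multPlus_trapezoid_general a b hba k η hpos hsum hgen βright hβsum

end TropPaths
end
end
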